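/- The topological Hausdorff dimension is not stable for arbitrary countable unions: dim_tH ℚ = 0 and dim_tH(ℝ \ ℚ) = 0, but dim_tH ℝ = 1. -/

import Mathlib

open TopologicalSpace Set ENNReal NNReal MeasureTheory

/-- The topological Hausdorff dimension of a metric space: the infimum of all `d ∈ [0,∞]`
such that the space has a topological basis all of whose members `U` satisfy
`dimH (frontier U) ≤ d - 1` (with the convention `dimH ∅ = -1`, i.e. for `d < 1` the
condition forces `frontier U = ∅`). -/
noncomputable def dimTH (X : Type*) [EMetricSpace X] : ℝ≥0∞ :=
  ⨅ (d : ℝ≥0∞) (_ : ∃ B : Set (Set X), IsTopologicalBasis B ∧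
      ∀ U ∈ B, frontier U = ∅ ∨ dimH (frontier U) + 1 ≤ d), d

/-!
If `S ⊆ ℝ` has dense complement, the traces on `S` of intervals with endpoints outside `S` form a
basis of sets with empty frontier; `ℚ` and `ℝ \ ℚ` both have dense complement, so both have
dimension `0`. On `ℝ` itself, open intervals have a two-point frontier, of Hausdorff dimension `0`,
giving `dimTH ℝ ≤ 1`; conversely, for `d < 1` every member of a witnessing basis is clopen, which a
connected space does not allow.
-/

section LinearOrder

variable {α : Type*} [LinearOrder α] [TopologicalSpace α] [OrderTopology α] [DenselyOrdered α]

lemma frontier_Ioo_subset_pair (a b : α) : frontier (Ioo a b) ⊆ {a, b} := by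
  rcases lt_or_ge a b with h | h
  · rw [frontier_Ioo h]
  · rw [Ioo_eq_empty h.not_gt, frontier_empty]
    exact empty_subset _

lemma isTopologicalBasis_Ioo_of_dense [NoMinOrder α] [NoMaxOrder α] {D : Set α} (hD : Dense D) :
    IsTopologicalBasis {U | ∃ a ∈ D, ∃ b ∈ D, U = Ioo a b} := by
  refine isTopologicalBasis_of_isOpen_of_nhds ?_ fun x V hxV hV => ?_
  · rintro U ⟨a, -, b, -, rfl⟩
    exact isOpen_Ioo
  obtain ⟨l, u, ⟨hl, hu⟩, hlu⟩ := mem_nhds_iff_exists_Ioo_subset.mp (hV.mem_nhds hxV)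
  obtain ⟨a, haD, hla, hax⟩ := hD.exists_between hl
  obtain ⟨b, hbD, hxb, hbu⟩ := hD.exists_between hu
  exact ⟨Ioo a b, ⟨a, haD, b, hbD, rfl⟩, ⟨hax, hxb⟩,
    (Ioo_subset_Ioo hla.le hbu.le).trans hlu⟩

lemma isTopologicalBasis_isClopen_of_dense_compl [NoMinOrder α] [NoMaxOrder α] {S : Set α}
    (hS : Dense Sᶜ) : IsTopologicalBasis {U : Set S | IsClopen U} := by
  refine .of_isOpen_of_subset (fun U hU => hU.isOpen)
    ((isTopologicalBasis_Ioo_of_dense hS).isInducing .subtypeVal) ?_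
  rintro _ ⟨_, ⟨a, ha, b, hb, rfl⟩, rfl⟩
  refine isClopen_iff_frontier_eq_empty.mpr (eq_empty_of_forall_notMem fun x hx => ?_)
  rcases frontier_Ioo_subset_pair a b (continuous_subtype_val.frontier_preimage_subset _ hx)
    with h | h
  · exact ha (h ▸ x.2)
  · exact hb (h ▸ x.2)

end LinearOrder

section dimTH

variable {X : Type*} [EMetricSpace X]

lemma dimTH_le_of_isTopologicalBasis {B : Set (Set X)} (hB : IsTopologicalBasis B) {d : ℝ≥0∞}
    (h : ∀ U ∈ B, frontier U = ∅ ∨ dimH (frontier U) + 1 ≤ d) : dimTH X ≤ d :=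
  iInf₂_le d ⟨B, hB, h⟩

lemma dimTH_eq_zero_of_isTopologicalBasis_isClopen {B : Set (Set X)} (hB : IsTopologicalBasis B)
    (h : ∀ U ∈ B, IsClopen U) : dimTH X = 0 :=
  nonpos_iff_eq_zero.mp <| dimTH_le_of_isTopologicalBasis hB fun U hU =>
    .inl (isClopen_iff_frontier_eq_empty.mp (h U hU))

lemma dimTH_le_one_of_isTopologicalBasis_countable_frontier {B : Set (Set X)}
    (hB : IsTopologicalBasis B) (h : ∀ U ∈ B, (frontier U).Countable) : dimTH X ≤ 1 :=
  dimTH_le_of_isTopologicalBasis hB fun U hU => .inr (by rw [(h U hU).dimH_zero, zero_add])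

lemma one_le_dimTH [PreconnectedSpace X] [Nontrivial X] : 1 ≤ dimTH X := by
  refine le_iInf₂ fun d ⟨B, hB, hfrontier⟩ => le_of_not_gt fun hd => ?_
  obtain ⟨x, y, hxy⟩ := exists_pair_ne X
  obtain ⟨U, hUB, hxU, hUy⟩ := hB.exists_subset_of_mem_open hxy isOpen_ne
  have hU : IsClopen U := isClopen_iff_frontier_eq_empty.mpr <|
    (hfrontier U hUB).resolve_right fun h => (le_add_self.trans h).not_gt hd
  exact hUy (hU.eq_univ ⟨x, hxU⟩ ▸ mem_univ y) rfl

end dimTH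

lemma dimTH_eq_zero_of_dense_compl {α : Type*} [EMetricSpace α] [LinearOrder α] [OrderTopology α]
    [DenselyOrdered α] [NoMinOrder α] [NoMaxOrder α] {S : Set α} (hS : Dense Sᶜ) : dimTH S = 0 :=
  dimTH_eq_zero_of_isTopologicalBasis_isClopen (isTopologicalBasis_isClopen_of_dense_compl hS)
    fun _ hU => hU

lemma dimTH_real : dimTH ℝ = 1 := by
  refine le_antisymm ?_ one_le_dimTH
  refine dimTH_le_one_of_isTopologicalBasis_countable_frontier (isTopologicalBasis_Ioo_of_dense
    dense_univ) ?_
  rintro _ ⟨a, -, b, -, rfl⟩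
  exact ((countable_singleton b).insert a).mono (frontier_Ioo_subset_pair a b)

/-- Failure of stability: `dimTH ℚ = 0`, `dimTH (ℝ \ ℚ) = 0`, yet `dimTH ℝ = 1`. -/
theorem stmt12 :
    dimTH (Set.range ((↑) : ℚ → ℝ)) = 0 ∧
    dimTH ↥((Set.range ((↑) : ℚ → ℝ))ᶜ) = 0 ∧
    dimTH ℝ = 1 :=
  ⟨dimTH_eq_zero_of_dense_compl dense_irrational,
    dimTH_eq_zero_of_dense_compl (by rw [compl_compl]; exact Rat.denseRange_cast),
    dimTH_real⟩
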